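/- Let B ⊆ A be rings with automorphisms α of A and β of B, and suppose Φ : A → Hom_B(_β A_α, B) is an (A,B)-bimodule isomorphism (conditions L1, L2 of a twisted Frobenius extension). Then the map Ψ : A → Hom_B^R(A_{β^{-1}}, B) defined by Ψ(a)(x) = β(Φ(x)(a)) (where the domain carries left A-action twisted by α^{-1} and right B-action twisted by β^{-1}) is an isomorphism of (B,A)-bimodules. -/

import Mathlib

/-! Finite projectivity of `A` over `B` gives a dual basis `y = ∑ gᵢ(y) xᵢ`, and by surjectivity
of `Φ` every coordinate functional is `β ∘ Φ(aᵢ)`. Evaluating the expansion under `Φ` and using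
injectivity of `Φ` yields the dual identity `x = ∑ aᵢ Φ(x)(xᵢ)`; the first expansion makes `Ψ`
injective, the second exhibits `∑ f(aᵢ) xᵢ` as a preimage of `f` under `Ψ`. -/

theorem Module.exists_finite_dual_basis (R M : Type*) [Semiring R] [AddCommMonoid M] [Module R M]
    [Module.Finite R M] [Module.Projective R M] :
    ∃ (n : ℕ) (x : Fin n → M) (g : Fin n → M →ₗ[R] R), ∀ y, ∑ i, g i y • x i = y := by
  obtain ⟨n, π, s, -, -, hπs⟩ := Module.Finite.exists_comp_eq_id_of_projective R M
  refine ⟨n, fun i ↦ π fun j ↦ if i = j then 1 else 0, fun i ↦ LinearMap.proj i ∘ₗ s, fun y ↦ ?_⟩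
  exact (π.pi_apply_eq_sum_univ (s y)).symm.trans (LinearMap.congr_fun hπs y)

namespace TwistedFrobenius

variable {A : Type*} [Ring A] {B : Subring A} {β : B ≃+* B} {Φ : A →+ A →+ B}

theorem beta_apply_coe_mul (hΦBlin : ∀ (a : A) (b : B) (x : A), Φ a ((β b : A) * x) = b * Φ a x)
    (c : B) (x a : A) : β (Φ a ((c : A) * x)) = c * β (Φ a x) := by
  rw [← β.apply_symm_apply c, hΦBlin, map_mul]

theorem exists_eq_beta_apply
    (hΦsurj : ∀ f : A →+ B, (∀ (b : B) (x : A), f ((β b : A) * x) = b * f x) →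
      ∃ a : A, ∀ x : A, f x = Φ a x)
    (g : A →ₗ[B] B) : ∃ a : A, ∀ x : A, g x = β (Φ a x) := by
  obtain ⟨a, ha⟩ := hΦsurj (β.symm.toAddMonoidHom.comp g.toAddMonoidHom) fun b x ↦ by
    change β.symm (g (β b • x)) = b * β.symm (g x)
    rw [g.map_smul, smul_eq_mul, map_mul, β.symm_apply_apply]
  exact ⟨a, fun x ↦ by rw [← ha]; simp⟩

theorem exists_dual_basis [Module.Finite B A] [Module.Projective B A]
    (hΦsurj : ∀ f : A →+ B, (∀ (b : B) (x : A), f ((β b : A) * x) = b * f x) →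
      ∃ a : A, ∀ x : A, f x = Φ a x) :
    ∃ (n : ℕ) (xb av : Fin n → A), ∀ y : A, ∑ i, (β (Φ (av i) y) : A) * xb i = y := by
  obtain ⟨n, xb, g, hg⟩ := Module.exists_finite_dual_basis B A
  choose av hav using fun i ↦ exists_eq_beta_apply hΦsurj (g i)
  refine ⟨n, xb, av, fun y ↦ ?_⟩
  simpa only [hav, Subring.smul_def, smul_eq_mul] using hg y

variable {n : ℕ} {xb av : Fin n → A}

theorem apply_eq_sum (hΦBlin : ∀ (a : A) (b : B) (x : A), Φ a ((β b : A) * x) = b * Φ a x)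
    (hexp : ∀ y : A, ∑ i, (β (Φ (av i) y) : A) * xb i = y) (w y : A) :
    Φ w y = ∑ i, Φ (av i) y * Φ w (xb i) := by
  conv_lhs => rw [← hexp y]
  simp only [map_sum, hΦBlin]

theorem sum_mul_apply_eq (hΦBlin : ∀ (a : A) (b : B) (x : A), Φ a ((β b : A) * x) = b * Φ a x)
    (hΦB : ∀ (a : A) (b : B) (x : A), Φ (a * (b : A)) x = Φ a x * b)
    (hΦinj : ∀ a : A, (∀ x : A, Φ a x = 0) → a = 0)
    (hexp : ∀ y : A, ∑ i, (β (Φ (av i) y) : A) * xb i = y) (x : A) :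
    ∑ i, av i * (Φ x (xb i) : A) = x := by
  refine sub_eq_zero.mp (hΦinj _ fun v ↦ ?_)
  simp only [map_sub, map_sum, AddMonoidHom.sub_apply, AddMonoidHom.finsetSum_apply, hΦB,
    ← apply_eq_sum hΦBlin hexp, sub_self]

theorem eq_zero_of_forall_beta_flip_apply_eq_zero
    (hexp : ∀ y : A, ∑ i, (β (Φ (av i) y) : A) * xb i = y) {a : A}
    (ha : ∀ x : A, β (Φ x a) = 0) : a = 0 := by
  rw [← hexp a]
  simp [ha]

theorem exists_eq_beta_flip_apply
    (hΦBlin : ∀ (a : A) (b : B) (x : A), Φ a ((β b : A) * x) = b * Φ a x)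
    (hΦB : ∀ (a : A) (b : B) (x : A), Φ (a * (b : A)) x = Φ a x * b)
    (hΦinj : ∀ a : A, (∀ x : A, Φ a x = 0) → a = 0)
    (hexp : ∀ y : A, ∑ i, (β (Φ (av i) y) : A) * xb i = y)
    (f : A →+ B) (hf : ∀ (b : B) (x : A), f (x * (β.symm b : A)) = f x * b) :
    ∃ a : A, ∀ x : A, f x = β (Φ x a) := by
  refine ⟨∑ i, (f (av i) : A) * xb i, fun x ↦ ?_⟩
  calc f x = f (∑ i, av i * (Φ x (xb i) : A)) := by rw [sum_mul_apply_eq hΦBlin hΦB hΦinj hexp]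
    _ = ∑ i, f (av i) * β (Φ x (xb i)) := by
        simp only [map_sum, ← hf, RingEquiv.symm_apply_apply]
    _ = β (Φ x (∑ i, (f (av i) : A) * xb i)) := by
        simp only [map_sum, beta_apply_coe_mul hΦBlin]

end TwistedFrobenius

theorem psi_is_bimodule_iso_of_twisted_frobenius
    {A : Type u} [Ring A] (B : Subring A) (α : A ≃+* A) (β : B ≃+* B)
    (hfin : Module.Finite B A) (hproj : Module.Projective B A)
    (Φ : A → A →+ B)
    (hΦadd : ∀ a a' : A, Φ (a + a') = Φ a + Φ a')
    (hΦBlin : ∀ (a : A) (b : B) (x : A), Φ a ((β b : A) * x) = b * Φ a x)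
    (hΦA : ∀ (a a' x : A), Φ (a' * a) x = Φ a (x * α a'))
    (hΦB : ∀ (a : A) (b : B) (x : A), Φ (a * (b : A)) x = Φ a x * b)
    (hΦinj : ∀ a : A, (∀ x : A, Φ a x = 0) → a = 0)
    (hΦsurj : ∀ f : A →+ B, (∀ (b : B) (x : A), f ((β b : A) * x) = b * f x) →
      ∃ a : A, ∀ x : A, f x = Φ a x) :
    -- Ψ a is additive in x (automatic since each Φ x is additive in its argument):
    (∀ (a x x' : A), β (Φ (x + x') a) = β (Φ x a) + β (Φ x' a)) ∧
    -- each Ψ a is right B-linear for the right B-action twisted by β⁻¹: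
    (∀ (a x : A) (b : B), β (Φ (x * (β.symm b : A)) a) = β (Φ x a) * b) ∧
    -- Ψ is additive:
    (∀ (a a' x : A), β (Φ x (a + a')) = β (Φ x a) + β (Φ x a')) ∧
    -- Ψ is left B-linear:
    (∀ (b : B) (a x : A), β (Φ x ((b : A) * a)) = b * β (Φ x a)) ∧
    -- Ψ is right A-linear:
    (∀ (a a' x : A), β (Φ x (a * a')) = β (Φ (α.symm a' * x) a)) ∧
    -- Ψ is injective:
    (∀ a : A, (∀ x : A, β (Φ x a) = 0) → a = 0) ∧
    -- Ψ is surjective onto the right B-linear maps: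
    (∀ f : A →+ B, (∀ (b : B) (x : A), f (x * (β.symm b : A)) = f x * b) →
      ∃ a : A, ∀ x : A, f x = β (Φ x a)) := by
  let Φ' : A →+ A →+ B := AddMonoidHom.mk' Φ hΦadd
  obtain ⟨n, xb, av, hexp⟩ := TwistedFrobenius.exists_dual_basis (Φ := Φ') hΦsurj
  refine ⟨fun a x x' ↦ ?_, fun a x b ↦ ?_, fun a a' x ↦ by rw [map_add, map_add],
    fun b a x ↦ TwistedFrobenius.beta_apply_coe_mul (Φ := Φ') hΦBlin b a x, fun a a' x ↦ ?_,
    fun a ↦ TwistedFrobenius.eq_zero_of_forall_beta_flip_apply_eq_zero (Φ := Φ') hexp,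
    TwistedFrobenius.exists_eq_beta_flip_apply (Φ := Φ') hΦBlin hΦB hΦinj hexp⟩
  · rw [hΦadd, AddMonoidHom.add_apply, map_add]
  · rw [hΦB, map_mul, RingEquiv.apply_symm_apply]
  · rw [hΦA, RingEquiv.apply_symm_apply]
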